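/- Let k be a field of characteristic 2 and r ≥ 1. The k-algebra homomorphism σ from k[u_1,u_3,…,u_{2r−1}, t_1,…,t_r] to k[s_1,…,s_r, t_1,…,t_r] which is the identity on the t_i and sends u_{2a+1} (for 0 ≤ a ≤ r−1) to ∑_{m=1}^r s_m · e_a(t_1,…,\hat{t_m},…,t_r) is injective. -/

import Mathlib

/-! Let `E` be the `r × r` matrix with `E a m = e_a(t₁,…,t̂_m,…,t_r)`, so that `σ` sends the
vector `u` to `E s` and fixes the `t`s. Vieta's formula at `x = -t_i` gives
`∑_a (-t_i)^(r-1-a) E a m = ∏_{j ≠ m} (t_j - t_i)`, which vanishes for `i ≠ m`; hence a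
Vandermonde-type matrix times `E` is diagonal with nonzero entries and `det E ≠ 0`. Over the
fraction field of the target, `s ↦ E⁻¹ u`, `t ↦ t` then turns `σ` into the inclusion of the
polynomial ring in its fraction field, so `σ` is injective. -/

open MvPolynomial Finset

theorem Finset.prod_add_eq_sum_pow_mul_esymm {ι R : Type*} [CommRing R] (S : Finset ι)
    (f : ι → R) (x : R) :
    ∏ j ∈ S, (x + f j) =
      ∑ a ∈ range (#S + 1), x ^ (#S - a) * ∑ t ∈ S.powersetCard a, ∏ i ∈ t, f i := by
  have h := congrArg (Polynomial.eval x) (Multiset.prod_X_add_C_eq_sum_esymm (S.val.map f))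
  simp only [Multiset.map_map, Function.comp_def, Polynomial.eval_multiset_prod,
    Polynomial.eval_add, Polynomial.eval_X, Polynomial.eval_C, Polynomial.eval_finsetSum,
    Polynomial.eval_mul, Polynomial.eval_pow, Multiset.card_map, esymm_map_val] at h
  rw [prod_eq_multiset_prod, h]
  exact sum_congr rfl fun a _ => mul_comm _ _

def esymmEraseMatrix {R : Type*} [CommRing R] {r : ℕ} (T : Fin r → R) :
    Matrix (Fin r) (Fin r) R :=
  Matrix.of fun a m => ∑ s ∈ powersetCard (a : ℕ) (univ.erase m), ∏ i ∈ s, T i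

theorem vandermonde_mul_esymmEraseMatrix {R : Type*} [CommRing R] {r : ℕ} (T : Fin r → R) :
    Matrix.of (fun i a : Fin r => (-T i) ^ (r - 1 - (a : ℕ))) * esymmEraseMatrix T =
      Matrix.of fun i m => ∏ j ∈ univ.erase m, (T j - T i) := by
  ext i m
  simp only [Matrix.mul_apply, Matrix.of_apply, esymmEraseMatrix, sub_eq_neg_add]
  rw [prod_add_eq_sum_pow_mul_esymm, card_erase_of_mem (mem_univ m), card_univ,
    Fintype.card_fin, Nat.sub_add_cancel m.pos, ← Fin.sum_univ_eq_sum_range]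

theorem det_esymmEraseMatrix_ne_zero {R : Type*} [CommRing R] [IsDomain R] {r : ℕ}
    {T : Fin r → R} (hT : Function.Injective T) : (esymmEraseMatrix T).det ≠ 0 := by
  have hdiag : Matrix.of (fun i a : Fin r => (-T i) ^ (r - 1 - (a : ℕ))) * esymmEraseMatrix T =
      Matrix.diagonal fun m => ∏ j ∈ univ.erase m, (T j - T m) := by
    rw [vandermonde_mul_esymmEraseMatrix]
    ext i m
    rcases eq_or_ne i m with rfl | him
    · simp
    · rw [Matrix.of_apply, Matrix.diagonal_apply_ne _ him]
      exact prod_eq_zero (mem_erase.2 ⟨him, mem_univ i⟩) (sub_self _)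
  have hprod : (Matrix.diagonal fun m => ∏ j ∈ univ.erase m, (T j - T m)).det ≠ 0 := by
    rw [Matrix.det_diagonal]
    exact prod_ne_zero_iff.2 fun m _ => prod_ne_zero_iff.2 fun j hj =>
      sub_ne_zero.2 (hT.ne (ne_of_mem_erase hj))
  rw [← hdiag, Matrix.det_mul] at hprod
  exact right_ne_zero_of_mul hprod

theorem aeval_linear_substitution_injective {k ι κ : Type*} [CommRing k] [IsDomain k]
    [Fintype ι] [DecidableEq ι] {M : Matrix ι ι (MvPolynomial κ k)} (hM : M.det ≠ 0) :
    Function.Injective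
      (aeval (Sum.elim (fun a => ∑ m, X (Sum.inl m) * rename Sum.inr (M a m))
        fun i => X (Sum.inr i)) : MvPolynomial (ι ⊕ κ) k →ₐ[k] MvPolynomial (ι ⊕ κ) k) := by
  set R := MvPolynomial (ι ⊕ κ) k
  set F := FractionRing R
  set ψ : MvPolynomial κ k →ₐ[k] F := (IsScalarTower.toAlgHom k R F).comp (rename Sum.inr)
  have hψ : Function.Injective ψ :=
    (IsFractionRing.injective R F).comp (rename_injective _ Sum.inr_injective)
  have hunit : IsUnit (M.map ψ).det := by
    change IsUnit (ψ.mapMatrix M).det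
    rw [← ψ.map_det]
    exact ((map_ne_zero_iff ψ hψ).2 hM).isUnit
  set Y : ι → F := fun b => algebraMap R F (X (Sum.inl b))
  set g : ι ⊕ κ → F :=
    Sum.elim ((M.map ψ)⁻¹.mulVec Y) fun i => algebraMap R F (X (Sum.inr i))
  have hrename (p : MvPolynomial κ k) : aeval g (rename Sum.inr p) = ψ p := by
    rw [← AlgHom.comp_apply]
    congr 1
    refine algHom_ext fun i => ?_
    rw [AlgHom.comp_apply, rename_X, aeval_X, AlgHom.comp_apply, rename_X]
    rfl
  refine Function.Injective.of_comp (f := aeval g) ?_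
  suffices hleft : (aeval g).comp (aeval _) = IsScalarTower.toAlgHom k R F by
    rw [← AlgHom.coe_comp, hleft]
    exact IsFractionRing.injective R F
  refine algHom_ext ?_
  rintro (a | i)
  · have hinv : (M.map ψ).mulVec ((M.map ψ)⁻¹.mulVec Y) = Y := by
      rw [Matrix.mulVec_mulVec, Matrix.mul_nonsing_inv _ hunit, Matrix.one_mulVec]
    rw [AlgHom.comp_apply, aeval_X, Sum.elim_inl]
    calc (aeval g) (∑ m, X (Sum.inl m) * rename Sum.inr (M a m))
        = (M.map ψ).mulVec ((M.map ψ)⁻¹.mulVec Y) a := by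
          simp only [map_sum, map_mul, aeval_X, hrename]
          exact sum_congr rfl fun m _ => mul_comm _ _
      _ = Y a := congrFun hinv a
  · rw [AlgHom.comp_apply, aeval_X, Sum.elim_inr, aeval_X]; rfl

theorem odd_u_classes_substitution_injective
    (k : Type*) [Field k] (r : ℕ) :
    Function.Injective
      (MvPolynomial.aeval
        (fun v : Fin r ⊕ Fin r =>
          match v with
          | Sum.inl a =>
              ∑ m : Fin r,
                X (Sum.inl m) *
                  ∑ s ∈ Finset.powersetCard (a : ℕ) ((Finset.univ : Finset (Fin r)).erase m),
                    ∏ i ∈ s, X (Sum.inr i)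
          | Sum.inr i => X (Sum.inr i)) :
        MvPolynomial (Fin r ⊕ Fin r) k →ₐ[k] MvPolynomial (Fin r ⊕ Fin r) k) := by
  convert aeval_linear_substitution_injective
    (det_esymmEraseMatrix_ne_zero (X_injective (σ := Fin r) (R := k))) using 2
  refine congrArg aeval (funext fun v => ?_)
  rcases v with a | i
  · simp only [Sum.elim_inl, esymmEraseMatrix, Matrix.of_apply, map_sum, map_prod, rename_X]
  · rfl
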